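/- For λ ∈ (0,1), ∫_λ^1 dx/√(2(1-x)(x² - λ²)) = √(2/(1+λ)) · K((1-λ)/(1+λ)), where K is the complete elliptic integral of the first kind (with parameter m = k²). -/

import Mathlib

/-!
Substitute `x = 1 - (1 - λ) sin² θ`. Then `1 - x = (1 - λ) sin² θ`, `x - λ = (1 - λ) cos² θ` and
`x + λ = (1 + λ)(1 - m sin² θ)` with `m = (1 - λ)/(1 + λ)`, while `|dx| = 2 (1 - λ) sin θ cos θ dθ`;
the factor `(1 - λ) sin θ cos θ` cancels and what remains is `√(2/(1+λ)) / √(1 - m sin² θ)`.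
-/

open Real MeasureTheory Set

/-- Complete elliptic integral of the first kind, parameter m = k². -/
noncomputable def ellK (m : ℝ) : ℝ :=
  ∫ θ in (0:ℝ)..(Real.pi/2), 1 / Real.sqrt (1 - m * Real.sin θ ^ 2)

theorem hasDerivAt_one_sub_mul_sin_sq (a θ : ℝ) :
    HasDerivAt (fun θ => 1 - a * sin θ ^ 2) (-(a * (2 * sin θ * cos θ))) θ := by
  simpa using (((hasDerivAt_sin θ).pow 2).const_mul a).const_sub 1

section SinSqSubstitution

variable {a : ℝ}

theorem strictAntiOn_one_sub_mul_sin_sq (ha : 0 < a) :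
    StrictAntiOn (fun θ => 1 - a * sin θ ^ 2) (Icc 0 (π / 2)) := by
  intro x hx y hy hxy
  have hIcc : Icc 0 (π / 2) ⊆ Icc (-(π / 2)) (π / 2) :=
    Icc_subset_Icc_left (by linarith [pi_pos])
  have hsin : sin x < sin y := strictMonoOn_sin (hIcc hx) (hIcc hy) hxy
  have hsin_nonneg : 0 ≤ sin x := sin_nonneg_of_nonneg_of_le_pi hx.1 (by linarith [hx.2, pi_pos])
  have hsq : sin x ^ 2 < sin y ^ 2 := pow_lt_pow_left₀ hsin hsin_nonneg two_ne_zero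
  simp only
  nlinarith

theorem image_one_sub_mul_sin_sq_Ioo (ha : 0 < a) :
    (fun θ => 1 - a * sin θ ^ 2) '' Ioo 0 (π / 2) = Ioo (1 - a) 1 := by
  have hcont : ContinuousOn (fun θ => 1 - a * sin θ ^ 2) (Icc 0 (π / 2)) := by fun_prop
  rw [hcont.image_Ioo_of_strictAntiOn (by positivity) (strictAntiOn_one_sub_mul_sin_sq ha)]
  simp

end SinSqSubstitution

theorem two_mul_one_sub_mul_sq_sub_sq_of_sin_sq {lam : ℝ} (hlam : 1 + lam ≠ 0) (θ : ℝ) :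
    2 * (1 - (1 - (1 - lam) * sin θ ^ 2)) * ((1 - (1 - lam) * sin θ ^ 2) ^ 2 - lam ^ 2) =
      ((1 - lam) * sin θ * cos θ) ^ 2 *
        (2 * (1 + lam) * (1 - (1 - lam) / (1 + lam) * sin θ ^ 2)) := by
  have hcos : cos θ ^ 2 = 1 - sin θ ^ 2 := by linarith [sin_sq_add_cos_sq θ]
  rw [mul_pow, mul_pow, hcos]
  field_simp
  ring

theorem abs_deriv_mul_inv_sqrt_eq {lam θ : ℝ} (hlam : lam ∈ Ioo (0:ℝ) 1)
    (hθ : θ ∈ Ioo 0 (π / 2)) :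
    |-((1 - lam) * (2 * sin θ * cos θ))| *
        (1 / √(2 * (1 - (1 - (1 - lam) * sin θ ^ 2)) *
          ((1 - (1 - lam) * sin θ ^ 2) ^ 2 - lam ^ 2))) =
      √(2 / (1 + lam)) * (1 / √(1 - (1 - lam) / (1 + lam) * sin θ ^ 2)) := by
  obtain ⟨h0, h1⟩ := hlam
  have hsin : 0 < sin θ := sin_pos_of_pos_of_lt_pi hθ.1 (by linarith [hθ.2, pi_pos])
  have hcos : 0 < cos θ := cos_pos_of_mem_Ioo ⟨by linarith [hθ.1, pi_pos], hθ.2⟩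
  have hjac : 0 < (1 - lam) * sin θ * cos θ := by
    have : 0 < 1 - lam := by linarith
    positivity
  have hscale : 2 * (1 + lam) = (2 / √(2 / (1 + lam))) ^ 2 := by
    rw [div_pow, sq_sqrt (by positivity)]
    field_simp
  rw [two_mul_one_sub_mul_sq_sub_sq_of_sin_sq (by linarith), abs_neg, abs_of_pos (by linarith),
    hscale, sqrt_mul (sq_nonneg _), sqrt_sq hjac.le, sqrt_mul (sq_nonneg _),
    sqrt_sq (by positivity)]
  field_simp

theorem stmt11 (lam : ℝ) (hlam : lam ∈ Set.Ioo (0:ℝ) 1) :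
    (∫ x in lam..1, 1 / Real.sqrt (2 * (1 - x) * (x^2 - lam^2))) =
    Real.sqrt (2/(1 + lam)) * ellK ((1 - lam)/(1 + lam)) := by
  have ha : 0 < 1 - lam := by linarith [hlam.2]
  have hsubst := integral_image_eq_integral_abs_deriv_smul measurableSet_Ioo
    (fun θ _ => (hasDerivAt_one_sub_mul_sin_sq (1 - lam) θ).hasDerivWithinAt)
    ((strictAntiOn_one_sub_mul_sin_sq ha).injOn.mono Ioo_subset_Icc_self)
    (fun x => 1 / √(2 * (1 - x) * (x ^ 2 - lam ^ 2)))
  rw [image_one_sub_mul_sin_sq_Ioo ha, sub_sub_cancel] at hsubst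
  simp only [smul_eq_mul] at hsubst
  rw [intervalIntegral.integral_of_le hlam.2.le, integral_Ioc_eq_integral_Ioo, hsubst,
    setIntegral_congr_fun measurableSet_Ioo fun θ hθ => abs_deriv_mul_inv_sqrt_eq hlam hθ,
    integral_const_mul, ellK, intervalIntegral.integral_of_le (by positivity),
    integral_Ioc_eq_integral_Ioo]
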